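/- Let a, b, c ∈ Aut(X*) be defined by the wreath recursion a = σ(c,c), b = (a,b), c = (b,a) (the Bellaterra automaton). Then a² = b² = c² = 1, and the group G = ⟨a,b,c⟩ is isomorphic to the free product C₂ * C₂ * C₂: the canonical homomorphism C₂ * C₂ * C₂ → G sending the generators of the three free factors to a, b, c is an isomorphism; equivalently, every nonempty word over {a,b,c} in which no two consecutive letters are equal represents a nontrivial element of G. -/

import Mathlib

/-- `WRec s f f₀ f₁` says that the tree automorphism `f` of the binary rooted tree
`X* = List Bool` is given by the wreath recursion `f = σˢ(f₀, f₁)`: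
the root permutation of `f` is the transposition `σ` when `s = true` and is trivial when
`s = false`, the section of `f` at the letter `0 = false` is `f₀`, and the section of `f`
at the letter `1 = true` is `f₁`. -/
def WRec (s : Bool) (f f₀ f₁ : Equiv.Perm (List Bool)) : Prop :=
  f [] = [] ∧ (∀ w : List Bool, f (false :: w) = s :: f₀ w) ∧
    (∀ w : List Bool, f (true :: w) = (!s) :: f₁ w)

/-- The defining relators of the free product `C₂ * C₂ * C₂` of three copies of the
cyclic group of order 2: the squares of the three generators. -/
def freeProductC2Rels : Set (FreeGroup (Fin 3)) :=
  {FreeGroup.of 0 ^ 2, FreeGroup.of 1 ^ 2, FreeGroup.of 2 ^ 2}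

/-!
The root permutation of a word in `a, b, c` is the parity of its number of `a`'s, and its
section at a vertex is again a word of the same length, reduced if the original one is (these
sections form the dual automaton). A trivial word has trivial root permutation and trivial
sections, so it suffices to show that every nonempty reduced word can be moved, by taking
sections along some path, to a reduced word with an odd number of `a`'s.

This follows from transitivity of the dual action on reduced words of each length. Taking
sections is injective on the finite set of reduced words of a given length, hence periodic, so
reachability is symmetric. Transitivity is proved by induction on the length: the tails are
matched by induction, and the first letter is then adjusted using the path `swapPath`, which
fixes the explicit 5-periodic reduced word `periodicWord m` and exchanges the two letters that
can stand in front of `h :: periodicWord m`.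

Finally, every element of `C₂ * C₂ * C₂` is the image of a reduced word, so the canonical map
onto `⟨a, b, c⟩` is injective.
-/

open Function

theorem Set.MapsTo.exists_pos_iterate_eq {α : Type*} {s : Set α} {f : α → α} (hs : s.Finite)
    (hf : Set.MapsTo f s s) (hinj : Set.InjOn f s) {x : α} (hx : x ∈ s) :
    ∃ k > 0, f^[k] x = x := by
  have := hs.to_subtype
  obtain ⟨k, hk, hper⟩ :=
    mem_periodicPts.mp ((hf.restrict_inj.mpr hinj).mem_periodicPts ⟨x, hx⟩)
  exact ⟨k, hk, by simpa [hf.coe_iterate_restrict] using congrArg Subtype.val hper⟩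

namespace FreeProductC2

lemma of_mul_self (i : Fin 3) :
    (PresentedGroup.of i : PresentedGroup freeProductC2Rels) * PresentedGroup.of i = 1 := by
  rw [← pow_two]
  exact PresentedGroup.one_of_mem (by fin_cases i <;> simp [freeProductC2Rels])

lemma exists_isChain_prod_eq_of_mul {l : List (Fin 3)} (hl : l.IsChain (· ≠ ·)) (i : Fin 3) :
    ∃ l' : List (Fin 3), l'.IsChain (· ≠ ·) ∧ (l'.map PresentedGroup.of).prod =
      (PresentedGroup.of i : PresentedGroup freeProductC2Rels) *
        (l.map PresentedGroup.of).prod := by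
  rcases l with _ | ⟨g, t⟩
  · exact ⟨[i], .singleton i, by simp⟩
  rcases eq_or_ne i g with rfl | hig
  · refine ⟨t, hl.of_cons, ?_⟩
    rw [List.map_cons, List.prod_cons, ← mul_assoc, of_mul_self, one_mul]
  · exact ⟨i :: g :: t, .cons_cons hig hl, by simp⟩

lemma exists_isChain_prod_eq (x : PresentedGroup freeProductC2Rels) :
    ∃ l : List (Fin 3), l.IsChain (· ≠ ·) ∧ (l.map PresentedGroup.of).prod = x := by
  have hx : x ∈ Subgroup.closure (Set.range PresentedGroup.of) := by simp
  induction hx using Subgroup.closure_induction_left with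
  | one => exact ⟨[], .nil, rfl⟩
  | mul_left _ hi _ _ ih =>
    obtain ⟨i, rfl⟩ := hi
    obtain ⟨l, hl, rfl⟩ := ih
    exact exists_isChain_prod_eq_of_mul hl i
  | inv_mul_cancel _ hi _ _ ih =>
    obtain ⟨i, rfl⟩ := hi
    obtain ⟨l, hl, rfl⟩ := ih
    rw [inv_eq_of_mul_eq_one_right (of_mul_self i)]
    exact exists_isChain_prod_eq_of_mul hl i

theorem exists_bijective_of_prod_ne_one {G : Type*} [Group G] {f : Fin 3 → G}
    (hf : ∀ i, f i * f i = 1)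
    (hfree : ∀ l : List (Fin 3), l ≠ [] → l.IsChain (· ≠ ·) → (l.map f).prod ≠ 1) :
    ∃ ψ : PresentedGroup freeProductC2Rels →* Subgroup.closure (Set.range f),
      Function.Bijective ψ ∧ ∀ i, (ψ (PresentedGroup.of i) : G) = f i := by
  have hrels : ∀ r ∈ freeProductC2Rels, FreeGroup.lift f r = 1 := by
    simp [freeProductC2Rels, pow_two, hf]
  set φ := PresentedGroup.toGroup hrels
  have hrange : φ.range = Subgroup.closure (Set.range f) := by
    rw [MonoidHom.range_eq_map, ← PresentedGroup.closure_range_of, MonoidHom.map_closure,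
      ← Set.range_comp]
    congr 1
    exact congrArg Set.range (funext fun i => PresentedGroup.toGroup.of hrels)
  have hinj : Function.Injective φ := by
    rw [injective_iff_map_eq_one]
    intro x hx
    obtain ⟨l, hl, rfl⟩ := exists_isChain_prod_eq x
    rw [map_list_prod, List.map_map] at hx
    by_contra hne
    refine hfree l (by rintro rfl; exact hne rfl) hl ?_
    simpa [Function.comp_def, φ, PresentedGroup.toGroup.of] using hx
  refine ⟨(MulEquiv.subgroupCongr hrange).toMonoidHom.comp φ.rangeRestrict,
    (MulEquiv.subgroupCongr hrange).bijective.comp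
      ⟨φ.rangeRestrict_injective_iff.mpr hinj, φ.rangeRestrict_surjective⟩,
    fun i => PresentedGroup.toGroup.of hrels⟩

end FreeProductC2

namespace Bellaterra

-- `rootFlip l`, `sectionWord x l` and `actWord l` are the root permutation, the section at `x`
-- and the action on `X*` of the product of the word `l`, with `0, 1, 2` standing for
-- `a = σ(c,c)`, `b = (a,b)`, `c = (b,a)`.
def rootFlip : List (Fin 3) → Bool
  | [] => false
  | g :: l => xor (decide (g = 0)) (rootFlip l)

def letterSection (x : Bool) : Fin 3 → Fin 3 :=
  if x then ![2, 1, 0] else ![2, 0, 1]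

def sectionWord (x : Bool) : List (Fin 3) → List (Fin 3)
  | [] => []
  | g :: l => letterSection (xor x (rootFlip l)) g :: sectionWord x l

def sectionWordAlong : List Bool → List (Fin 3) → List (Fin 3)
  | [], l => l
  | x :: v, l => sectionWordAlong v (sectionWord x l)

def actWord : List (Fin 3) → List Bool → List Bool
  | _, [] => []
  | l, x :: v => xor x (rootFlip l) :: actWord (sectionWord x l) v

lemma rootFlip_append (l m : List (Fin 3)) :
    rootFlip (l ++ m) = xor (rootFlip l) (rootFlip m) := by
  induction l with
  | nil => simp [rootFlip]
  | cons g l ih => simp [rootFlip, ih]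

lemma sectionWord_append (x : Bool) (l m : List (Fin 3)) :
    sectionWord x (l ++ m) = sectionWord (xor x (rootFlip m)) l ++ sectionWord x m := by
  induction l with
  | nil => rfl
  | cons g l ih =>
    simp only [List.cons_append, sectionWord, ih, rootFlip_append, Bool.xor_comm (rootFlip l),
      Bool.xor_assoc]

lemma length_sectionWord (x : Bool) (l : List (Fin 3)) : (sectionWord x l).length = l.length := by
  induction l with
  | nil => rfl
  | cons g l ih => simp [sectionWord, ih]

lemma letterSection_injective (x : Bool) : Injective (letterSection x) := by
  cases x <;> decide

lemma sectionWord_injective (x : Bool) : Injective (sectionWord x) := by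
  intro l l' h
  induction l generalizing l' with
  | nil => cases l' <;> simp_all [sectionWord]
  | cons g l ih =>
    cases l' with
    | nil => simp [sectionWord] at h
    | cons g' l' =>
      simp only [sectionWord, List.cons.injEq] at h
      obtain rfl := ih h.2
      rw [letterSection_injective _ h.1]

lemma letterSection_ne (s : Bool) {g g' : Fin 3} (h : g ≠ g') :
    letterSection (xor s (decide (g' = 0))) g ≠ letterSection s g' := by
  revert g g' s; decide

lemma isChain_sectionWord (x : Bool) {l : List (Fin 3)} (hl : l.IsChain (· ≠ ·)) :
    (sectionWord x l).IsChain (· ≠ ·) := by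
  induction l with
  | nil => exact .nil
  | cons g l ih =>
    cases l with
    | nil => exact .singleton _
    | cons g' l =>
      rw [List.isChain_cons_cons] at hl
      refine .cons_cons ?_ (ih hl.2)
      simpa only [rootFlip, ← Bool.xor_assoc, Bool.xor_comm (decide (g' = 0))] using
        letterSection_ne (xor x (rootFlip l)) hl.1

lemma sectionWordAlong_append_path (v₁ v₂ : List Bool) (l : List (Fin 3)) :
    sectionWordAlong (v₁ ++ v₂) l = sectionWordAlong v₂ (sectionWordAlong v₁ l) := by
  induction v₁ generalizing l with
  | nil => rfl
  | cons x v ih => exact ih _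

lemma length_sectionWordAlong (v : List Bool) (l : List (Fin 3)) :
    (sectionWordAlong v l).length = l.length := by
  induction v generalizing l with
  | nil => rfl
  | cons x v ih => simp [sectionWordAlong, ih, length_sectionWord]

lemma sectionWordAlong_injective (v : List Bool) : Injective (sectionWordAlong v) := by
  induction v with
  | nil => exact injective_id
  | cons x v ih => exact ih.comp (sectionWord_injective x)

lemma isChain_sectionWordAlong (v : List Bool) {l : List (Fin 3)} (hl : l.IsChain (· ≠ ·)) :
    (sectionWordAlong v l).IsChain (· ≠ ·) := by
  induction v generalizing l with
  | nil => exact hl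
  | cons x v ih => exact ih (isChain_sectionWord x hl)

lemma sectionWordAlong_append (v : List Bool) (l m : List (Fin 3)) :
    sectionWordAlong v (l ++ m) = sectionWordAlong (actWord m v) l ++ sectionWordAlong v m := by
  induction v generalizing l m with
  | nil => rfl
  | cons x v ih => simp only [sectionWordAlong, actWord, sectionWord_append, ih]

lemma actWord_append (l m : List (Fin 3)) (v : List Bool) :
    actWord (l ++ m) v = actWord l (actWord m v) := by
  induction v generalizing l m with
  | nil => rfl
  | cons x v ih =>
    simp only [actWord, sectionWord_append, ih, rootFlip_append, Bool.xor_assoc,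
      Bool.xor_comm (rootFlip l)]

lemma sectionWordAlong_cons (v : List Bool) (g : Fin 3) (u : List (Fin 3)) :
    ∃ c, sectionWordAlong v (g :: u) = c :: sectionWordAlong v u := by
  obtain ⟨c, hc⟩ := List.length_eq_one_iff.mp (length_sectionWordAlong (actWord u v) [g])
  exact ⟨c, by rw [← List.singleton_append, sectionWordAlong_append, hc, List.singleton_append]⟩

def Reaches (l m : List (Fin 3)) : Prop := ∃ v, sectionWordAlong v l = m

lemma Reaches.refl (l : List (Fin 3)) : Reaches l l := ⟨[], rfl⟩

lemma Reaches.trans {l m k : List (Fin 3)} (h₁ : Reaches l m) (h₂ : Reaches m k) :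
    Reaches l k := by
  obtain ⟨v₁, rfl⟩ := h₁
  obtain ⟨v₂, rfl⟩ := h₂
  exact ⟨v₁ ++ v₂, sectionWordAlong_append_path v₁ v₂ l⟩

lemma sectionWordAlong_replicate (k : ℕ) (x : Bool) (l : List (Fin 3)) :
    sectionWordAlong (List.replicate k x) l = (sectionWord x)^[k] l := by
  induction k generalizing l with
  | zero => rfl
  | succ k ih => exact ih _

lemma reaches_sectionWord_self (x : Bool) {l : List (Fin 3)} (hl : l.IsChain (· ≠ ·)) :
    Reaches (sectionWord x l) l := by
  let s : Set (List (Fin 3)) := {m | m.length = l.length ∧ m.IsChain (· ≠ ·)}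
  have hs : s.Finite := (List.finite_length_eq (Fin 3) l.length).subset fun _ h => h.1
  obtain ⟨k, hk, hper⟩ := Set.MapsTo.exists_pos_iterate_eq hs
    (fun m hm => ⟨(length_sectionWord x m).trans hm.1, isChain_sectionWord x hm.2⟩)
    (sectionWord_injective x).injOn (show l ∈ s from ⟨rfl, hl⟩)
  refine ⟨List.replicate (k - 1) x, ?_⟩
  rw [sectionWordAlong_replicate, ← iterate_succ_apply, Nat.succ_eq_add_one,
    Nat.sub_add_cancel hk, hper]

lemma Reaches.symm {l m : List (Fin 3)} (hl : l.IsChain (· ≠ ·)) (h : Reaches l m) :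
    Reaches m l := by
  obtain ⟨v, rfl⟩ := h
  induction v generalizing l with
  | nil => exact .refl l
  | cons x v ih =>
    exact (ih (isChain_sectionWord x hl)).trans (reaches_sectionWord_self x hl)

def periodicLetter (i : ℕ) : Fin 3 := ![0, 2, 0, 1, 2] (Fin.ofNat 5 i)

def periodicWord : ℕ → List (Fin 3)
  | 0 => []
  | m + 1 => periodicLetter m :: periodicWord m

def swapPath : List Bool := [false, false, false, true, true]

lemma periodicLetter_mod_add (m j : ℕ) : periodicLetter (m % 5 + j) = periodicLetter (m + j) := by
  simp only [periodicLetter, Fin.ofNat, Nat.mod_add_mod]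

lemma periodicLetter_add_five (i : ℕ) : periodicLetter (i + 5) = periodicLetter i := by
  simp only [periodicLetter, Fin.ofNat, Nat.add_mod_right]

lemma periodicLetter_succ_ne (i : ℕ) : periodicLetter (i + 1) ≠ periodicLetter i := by
  have key : ∀ r < 5, periodicLetter (r + 1) ≠ periodicLetter (r + 0) := by decide
  have := key (i % 5) (Nat.mod_lt _ (by norm_num))
  rwa [periodicLetter_mod_add, periodicLetter_mod_add, add_zero] at this

lemma length_periodicWord (m : ℕ) : (periodicWord m).length = m := by
  induction m with
  | zero => rfl
  | succ m ih => simp [periodicWord, ih]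

lemma isChain_cons_periodicWord {h : Fin 3} (m : ℕ) (hh : h ≠ periodicLetter (m + 4)) :
    (h :: periodicWord m).IsChain (· ≠ ·) := by
  induction m generalizing h with
  | zero => exact .singleton h
  | succ m ih =>
    rw [show m + 1 + 4 = m + 5 by rfl, periodicLetter_add_five] at hh
    refine .cons_cons hh (ih ?_)
    simpa only [periodicLetter_add_five] using periodicLetter_succ_ne (m + 4)

lemma periodicWord_add_five (k : ℕ) : periodicWord (k + 5) =
    (List.range 5).reverse.map (fun j => periodicLetter (k % 5 + j)) ++ periodicWord k := by
  simp [periodicWord, periodicLetter_mod_add, List.range_succ]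

lemma swapPath_rotate_mod (m : ℕ) : swapPath.rotate (4 * (m % 5)) = swapPath.rotate (4 * m) := by
  rw [← List.rotate_mod, ← List.rotate_mod swapPath (4 * m)]
  congr 1
  simp only [swapPath, List.length_cons, List.length_nil]
  omega

lemma periodicWord_invariant (m : ℕ) :
    sectionWordAlong swapPath (periodicWord m) = periodicWord m ∧
      actWord (periodicWord m) swapPath = swapPath.rotate (4 * m) := by
  induction m using Nat.strong_induction_on with
  | _ m ih =>
    rcases Nat.lt_or_ge m 5 with hm | hm
    · interval_cases m <;> decide
    obtain ⟨k, rfl⟩ := Nat.exists_eq_add_of_le' hm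
    obtain ⟨hfix, hact⟩ := ih k (by omega)
    have key : ∀ r < 5,
        let B := (List.range 5).reverse.map (fun j => periodicLetter (r + j))
        sectionWordAlong (swapPath.rotate (4 * r)) B = B ∧
          actWord B (swapPath.rotate (4 * r)) = swapPath.rotate (4 * r) := by decide
    obtain ⟨hB₁, hB₂⟩ := key (k % 5) (Nat.mod_lt _ (by norm_num))
    rw [swapPath_rotate_mod] at hB₁ hB₂
    rw [periodicWord_add_five, sectionWordAlong_append, actWord_append, hfix, hact, hB₁, hB₂,
      ← swapPath_rotate_mod, ← swapPath_rotate_mod (k + 5)]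
    exact ⟨rfl, by congr 2; omega⟩

lemma exists_swap_head (m : ℕ) :
    ∃ h d₁ d₂ : Fin 3, (h :: periodicWord m).IsChain (· ≠ ·) ∧ d₁ ≠ h ∧ d₂ ≠ h ∧ d₁ ≠ d₂ ∧
      sectionWordAlong swapPath (d₁ :: h :: periodicWord m) = d₂ :: h :: periodicWord m := by
  have key : ∀ r < 5, ∃ h d₁ d₂ : Fin 3, h ≠ periodicLetter (r + 4) ∧ d₁ ≠ h ∧ d₂ ≠ h ∧
      d₁ ≠ d₂ ∧ sectionWordAlong (swapPath.rotate (4 * r)) [d₁, h] = [d₂, h] := by decide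
  obtain ⟨h, d₁, d₂, hh, h₁, h₂, h₁₂, hswap⟩ := key (m % 5) (Nat.mod_lt _ (by norm_num))
  rw [periodicLetter_mod_add] at hh
  rw [swapPath_rotate_mod, ← (periodicWord_invariant m).2] at hswap
  refine ⟨h, d₁, d₂, isChain_cons_periodicWord m hh, h₁, h₂, h₁₂, ?_⟩
  change sectionWordAlong swapPath ([d₁, h] ++ periodicWord m) = [d₂, h] ++ periodicWord m
  rw [sectionWordAlong_append, hswap, (periodicWord_invariant m).1]

def LevelTransitive (n : ℕ) : Prop :=
  ∀ p q : List (Fin 3), p.length = n → q.length = n → p.IsChain (· ≠ ·) → q.IsChain (· ≠ ·) →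
    Reaches p q

lemma LevelTransitive.reaches_cons {n : ℕ} (hn : LevelTransitive n) {t : List (Fin 3)}
    (ht : t.length = n) {g₁ g₂ : Fin 3} (h₁ : (g₁ :: t).IsChain (· ≠ ·))
    (h₂ : (g₂ :: t).IsChain (· ≠ ·)) : Reaches (g₁ :: t) (g₂ :: t) := by
  cases n with
  | zero =>
    obtain rfl := List.length_eq_zero_iff.mp ht
    have key : ∀ g₁ g₂ : Fin 3, ∃ k < 3,
        sectionWordAlong (List.replicate k false) [g₁] = [g₂] := by
      decide
    obtain ⟨k, -, hk⟩ := key g₁ g₂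
    exact ⟨_, hk⟩
  | succ m =>
    obtain ⟨h, d₁, d₂, hchain, hd₁, hd₂, hd₁₂, hswap⟩ := exists_swap_head m
    obtain ⟨v, hv⟩ := hn t _ ht (by simp [length_periodicWord]) h₁.of_cons hchain
    obtain ⟨c₁, hc₁⟩ := sectionWordAlong_cons v g₁ t
    obtain ⟨c₂, hc₂⟩ := sectionWordAlong_cons v g₂ t
    rw [hv] at hc₁ hc₂
    have hc₁h : c₁ ≠ h := (hc₁ ▸ isChain_sectionWordAlong v h₁).rel
    have hc₂h : c₂ ≠ h := (hc₂ ▸ isChain_sectionWordAlong v h₂).rel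
    rcases eq_or_ne g₁ g₂ with rfl | hg
    · exact .refl _
    have hc : c₁ ≠ c₂ := by
      rintro rfl
      exact hg (List.head_eq_of_cons_eq (sectionWordAlong_injective v (hc₁.trans hc₂.symm)))
    have hcore : Reaches (c₁ :: h :: periodicWord m) (c₂ :: h :: periodicWord m) := by
      have key : ∀ c₁ c₂ d₁ d₂ h : Fin 3, c₁ ≠ c₂ → d₁ ≠ d₂ → c₁ ≠ h → c₂ ≠ h → d₁ ≠ h →
          d₂ ≠ h → (c₁ = d₁ ∧ c₂ = d₂) ∨ (c₁ = d₂ ∧ c₂ = d₁) := by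
        decide
      rcases key c₁ c₂ d₁ d₂ h hc hd₁₂ hc₁h hc₂h hd₁ hd₂ with ⟨rfl, rfl⟩ | ⟨rfl, rfl⟩
      · exact ⟨swapPath, hswap⟩
      · exact Reaches.symm (.cons_cons hd₁ hchain) ⟨swapPath, hswap⟩
    exact (Reaches.trans ⟨v, hc₁⟩ hcore).trans (Reaches.symm h₂ ⟨v, hc₂⟩)

lemma levelTransitive (n : ℕ) : LevelTransitive n := by
  induction n with
  | zero =>
    intro p q hp hq _ _
    rw [List.length_eq_zero_iff.mp hp, List.length_eq_zero_iff.mp hq]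
    exact .refl []
  | succ n ih =>
    rintro (_ | ⟨g, u⟩) (_ | ⟨h, t⟩) hp hq hgu hht
    all_goals simp only [List.length_nil, List.length_cons, Nat.add_right_cancel_iff] at hp hq
    all_goals try omega
    obtain ⟨v, hv⟩ := ih u t hp hq hgu.of_cons hht.of_cons
    obtain ⟨c, hc⟩ := sectionWordAlong_cons v g u
    rw [hv] at hc
    exact Reaches.trans ⟨v, hc⟩ (ih.reaches_cons hq (hc ▸ isChain_sectionWordAlong v hgu) hht)

lemma exists_reduced_rootFlip (n : ℕ) :
    ∃ l : List (Fin 3), l.length = n + 1 ∧ l.IsChain (· ≠ ·) ∧ rootFlip l = true := by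
  induction n with
  | zero => exact ⟨[0], rfl, .singleton 0, rfl⟩
  | succ n ih =>
    obtain ⟨_ | ⟨h, t⟩, hlen, hchain, hflip⟩ := ih
    · simp at hlen
    have key : ∀ h : Fin 3, ∃ g : Fin 3, g ≠ 0 ∧ g ≠ h := by decide
    obtain ⟨g, hg0, hgh⟩ := key h
    exact ⟨g :: h :: t, by simp [hlen], .cons_cons hgh hchain, by simp [rootFlip, hg0, ← hflip]⟩

lemma exists_reaches_rootFlip {l : List (Fin 3)} (hne : l ≠ []) (hl : l.IsChain (· ≠ ·)) :
    ∃ v, rootFlip (sectionWordAlong v l) = true := by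
  obtain ⟨n, hn⟩ := Nat.exists_eq_add_one_of_ne_zero (List.length_pos_iff.mpr hne).ne'
  obtain ⟨m, hm, hmc, hflip⟩ := exists_reduced_rootFlip n
  obtain ⟨v, rfl⟩ := levelTransitive _ l m hn hm hl hmc
  exact ⟨v, hflip⟩

section Action

variable {a b c : Equiv.Perm (List Bool)}

lemma apply_apply_self (ha : WRec true a c c) (hb : WRec false b a b) (hc : WRec false c b a)
    (w : List Bool) : a (a w) = w ∧ b (b w) = w ∧ c (c w) = w := by
  induction w with
  | nil => exact ⟨by rw [ha.1, ha.1], by rw [hb.1, hb.1], by rw [hc.1, hc.1]⟩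
  | cons x w ih =>
    cases x
    · simp [ha.2.1, ha.2.2, hb.2.1, hc.2.1, ih]
    · simp [ha.2.1, ha.2.2, hb.2.2, hc.2.2, ih]

lemma letter_apply_cons (ha : WRec true a c c) (hb : WRec false b a b) (hc : WRec false c b a)
    (g : Fin 3) (x : Bool) (w : List Bool) :
    ![a, b, c] g (x :: w) = xor x (decide (g = 0)) :: ![a, b, c] (letterSection x g) w := by
  fin_cases g <;> cases x <;> simp [letterSection, ha.2.1, ha.2.2, hb.2.1, hb.2.2, hc.2.1, hc.2.2]

lemma prod_apply_cons (ha : WRec true a c c) (hb : WRec false b a b) (hc : WRec false c b a)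
    (l : List (Fin 3)) (x : Bool) (w : List Bool) :
    (l.map ![a, b, c]).prod (x :: w) =
      xor x (rootFlip l) :: ((sectionWord x l).map ![a, b, c]).prod w := by
  induction l generalizing x w with
  | nil => simp [rootFlip, sectionWord]
  | cons g l ih =>
    simp only [List.map_cons, List.prod_cons, Equiv.Perm.mul_apply, ih,
      letter_apply_cons ha hb hc, rootFlip, sectionWord, Bool.xor_assoc,
      Bool.xor_comm (decide (g = 0))]

lemma prod_sectionWord_eq_one (ha : WRec true a c c) (hb : WRec false b a b)
    (hc : WRec false c b a) {l : List (Fin 3)} (h : (l.map ![a, b, c]).prod = 1) :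
    rootFlip l = false ∧ ∀ x, ((sectionWord x l).map ![a, b, c]).prod = 1 := by
  have hcons := prod_apply_cons ha hb hc l
  simp only [h, Equiv.Perm.one_apply, List.cons.injEq] at hcons
  refine ⟨by simpa using (hcons false []).1, fun x => Equiv.ext fun w => ?_⟩
  exact ((hcons x w).2).symm

lemma prod_sectionWordAlong_eq_one (ha : WRec true a c c) (hb : WRec false b a b)
    (hc : WRec false c b a) (v : List Bool) {l : List (Fin 3)}
    (h : (l.map ![a, b, c]).prod = 1) : ((sectionWordAlong v l).map ![a, b, c]).prod = 1 := by
  induction v generalizing l with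
  | nil => exact h
  | cons x v ih => exact ih ((prod_sectionWord_eq_one ha hb hc h).2 x)

lemma prod_ne_one_of_isChain (ha : WRec true a c c) (hb : WRec false b a b)
    (hc : WRec false c b a) {l : List (Fin 3)} (hne : l ≠ [])
    (hl : l.IsChain (· ≠ ·)) : (l.map ![a, b, c]).prod ≠ 1 := by
  intro h
  obtain ⟨v, hv⟩ := exists_reaches_rootFlip hne hl
  rw [(prod_sectionWord_eq_one ha hb hc (prod_sectionWordAlong_eq_one ha hb hc v h)).1] at hv
  exact Bool.false_ne_true hv

end Action

end Bellaterra

theorem bellaterra_generates_free_product (a b c : Equiv.Perm (List Bool))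
    (ha : WRec true a c c) (hb : WRec false b a b) (hc : WRec false c b a) :
    a * a = 1 ∧ b * b = 1 ∧ c * c = 1 ∧
    (∃ ψ : PresentedGroup freeProductC2Rels →* Subgroup.closure {a, b, c},
      Function.Bijective ψ ∧
      (ψ (PresentedGroup.of 0) : Equiv.Perm (List Bool)) = a ∧
      (ψ (PresentedGroup.of 1) : Equiv.Perm (List Bool)) = b ∧
      (ψ (PresentedGroup.of 2) : Equiv.Perm (List Bool)) = c) ∧
    (∀ l : List (Fin 3), l ≠ [] → l.Chain' (· ≠ ·) → (l.map ![a, b, c]).prod ≠ 1) := by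
  have ha2 : a * a = 1 := Equiv.ext fun w => (Bellaterra.apply_apply_self ha hb hc w).1
  have hb2 : b * b = 1 := Equiv.ext fun w => (Bellaterra.apply_apply_self ha hb hc w).2.1
  have hc2 : c * c = 1 := Equiv.ext fun w => (Bellaterra.apply_apply_self ha hb hc w).2.2
  have hfree : ∀ l : List (Fin 3), l ≠ [] → l.IsChain (· ≠ ·) → (l.map ![a, b, c]).prod ≠ 1 :=
    fun _ hne hl => Bellaterra.prod_ne_one_of_isChain ha hb hc hne hl
  obtain ⟨ψ, hψ, hψ_of⟩ := FreeProductC2.exists_bijective_of_prod_ne_one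
    (by intro i; fin_cases i; exacts [ha2, hb2, hc2]) hfree
  have hrange : Set.range ![a, b, c] = {a, b, c} := by
    rw [Matrix.range_cons, Matrix.range_cons_cons_empty, Set.singleton_union]
  refine ⟨ha2, hb2, hc2, ?_, hfree⟩
  rw [← hrange]
  exact ⟨ψ, hψ, hψ_of 0, hψ_of 1, hψ_of 2⟩
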